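/- Let W_n be the wheel graph on n+1 vertices and C_n the cycle on n vertices. The linear-strand Betti numbers satisfy β_{i,i+1}(W_n) = β_{i,i+1}(C_n) + β_{i-1,i}(C_n) + C(n,i). -/

import Mathlib

open Finset

/-- The faces of the independence complex of a graph `G`: the finite independent sets. -/
def indepFaces {V : Type} (G : SimpleGraph V) : Set (Finset V) :=
  {s | ∀ a ∈ s, ∀ b ∈ s, ¬G.Adj a b}

/-- The space of simplicial `ℚ`-chains of the independence complex of `G` spanned by the
faces with exactly `i` vertices (for `i = 0` this is spanned by the empty face, so the
associated homology is reduced homology). -/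
abbrev chains {V : Type} (G : SimpleGraph V) (i : ℕ) : Type :=
  {s : Finset V // s ∈ indepFaces G ∧ s.card = i} →₀ ℚ

/-- The simplicial boundary map of the independence complex of `G`, from chains on faces with
`i+1` vertices to chains on faces with `i` vertices, with the usual alternating signs coming
from the linear order on the vertices. -/
noncomputable def bdry {V : Type} [DecidableEq V] [LinearOrder V] (G : SimpleGraph V)
    (i : ℕ) : chains G (i + 1) →ₗ[ℚ] chains G i :=
  Finsupp.lsum ℚ fun s => LinearMap.toSpanSingleton ℚ _
    (∑ a ∈ s.1.attach,
      ((-1 : ℚ) ^ (s.1.filter fun b => b < a.1).card) •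
        Finsupp.single
          ⟨s.1.erase a.1,
            ⟨fun x hx y hy =>
              s.2.1 x (Finset.mem_of_mem_erase hx) y (Finset.mem_of_mem_erase hy),
             by simp [Finset.card_erase_of_mem a.2, s.2.2]⟩⟩
          (1 : ℚ))

/-- The `j`-th reduced simplicial homology (with `ℚ`-coefficients) of the independence
complex of `G`: cycles supported on faces with `j+1` vertices modulo boundaries. -/
noncomputable abbrev redHomology {V : Type} [DecidableEq V] [LinearOrder V] (G : SimpleGraph V)
    (j : ℕ) : Type :=
  LinearMap.ker (bdry G j) ⧸
    (LinearMap.range (bdry G (j + 1))).comap (LinearMap.ker (bdry G j)).subtype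

/-- The cycle graph on `n` vertices, with edges `{i, i+1 mod n}`. -/
def cycleGraph (n : ℕ) : SimpleGraph (Fin n) :=
  SimpleGraph.fromRel fun i j => ((i : ℕ) + 1) % n = (j : ℕ)

/-- The wheel graph on `n+1` vertices: vertex `0` is the center, adjacent to every other
vertex, and the vertices `1,…,n` form an `n`-cycle. -/
def wheelGraph (n : ℕ) : SimpleGraph (Fin (n + 1)) :=
  SimpleGraph.fromRel fun a b =>
    a = 0 ∨ ∃ i j : Fin n, a = i.succ ∧ b = j.succ ∧ ((i : ℕ) + 1) % n = (j : ℕ)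

/-- The graded Betti numbers of the Stanley–Reisner ring of the independence complex of `G`
(i.e. of the edge ideal of `G`), given by Hochster's formula:
`β_{i,j} = Σ_{S ⊆ V, |S| = j} dim_ℚ H̃_{j-i-1}(Δ_{G[S]})`. -/
noncomputable def bettiNumber {V : Type} [Fintype V] [DecidableEq V] [LinearOrder V]
    (G : SimpleGraph V) (i j : ℕ) : ℕ :=
  ∑ S ∈ Finset.univ.filter fun S : Finset V => S.card = j,
    Module.finrank ℚ (redHomology (G.induce (S : Set V)) (j - i - 1))

/-!
For a finite nonempty graph `G`, the boundary `∂₀` onto the empty face is surjective, so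
`dim H̃₀(Ind G) = |V(G)| - 1 - rank ∂₁`, and the image of `∂₁` is spanned by the differences
`[b] - [a]` over the edges `ab` of the complement `Gᶜ`. Consequently, if `H ↪g G` is a graph
embedding whose image contains every non-isolated vertex of `Gᶜ`, then
`dim H̃₀(Ind G) + |V(H)| = dim H̃₀(Ind H) + |V(G)|`.

In `W_n` the rim vertices induce `C_n`, and the center `x₀` is adjacent to every other vertex,
hence isolated in the complement. So for `S ⊆ V(W_n)` with nonempty rim part `T`, `dim H̃₀` of
`W_n[S]` equals that of `C_n[T]` when `x₀ ∉ S` and exceeds it by one when `x₀ ∈ S`. Splitting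
Hochster's sum for `β_{i,i+1}(W_n)` according to whether `x₀ ∈ S` gives the three terms.
-/

section IndependenceComplex

variable {V W : Type} (G : SimpleGraph V) {H : SimpleGraph W}

theorem singleton_mem_indepFaces (v : V) : {v} ∈ indepFaces G := by
  simp [indepFaces]

theorem pair_mem_indepFaces [DecidableEq V] {a b : V} (h : ¬G.Adj a b) :
    {a, b} ∈ indepFaces G := by
  have h' : ¬G.Adj b a := fun h' => h h'.symm
  simp [indepFaces, h, h']

theorem map_mem_indepFaces (φ : H ↪g G) {s : Finset W}
    (hs : s ∈ indepFaces H) : s.map φ.toEmbedding ∈ indepFaces G := by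
  simp only [indepFaces, Set.mem_ofPred_eq, mem_map, forall_exists_index, and_imp,
    forall_apply_eq_imp_iff₂] at hs ⊢
  exact fun a ha b hb h => hs a ha b hb (φ.map_adj_iff.mp h)

instance uniqueFacesCardZero : Unique {s : Finset V // s ∈ indepFaces G ∧ s.card = 0} where
  default := ⟨∅, by simp [indepFaces], card_empty⟩
  uniq s := Subtype.ext (card_eq_zero.mp s.2.2)

noncomputable def vertexChain (v : V) : chains G 1 :=
  Finsupp.single ⟨{v}, singleton_mem_indepFaces G v, card_singleton v⟩ 1

open scoped Classical in
/-- Junk value `0` when `s` is not an `i`-vertex face; this keeps membership proofs out of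
`bdry_single`. -/
noncomputable def faceChain (i : ℕ) (s : Finset V) : chains G i :=
  if h : s ∈ indepFaces G ∧ s.card = i then Finsupp.single ⟨s, h⟩ 1 else 0

theorem faceChain_of_mem {i : ℕ} {s : Finset V} (h : s ∈ indepFaces G ∧ s.card = i) :
    faceChain G i s = Finsupp.single ⟨s, h⟩ 1 :=
  dif_pos h

theorem finrank_chains_one [Finite V] : Module.finrank ℚ (chains G 1) = Nat.card V := by
  classical
  have := Fintype.ofFinite V
  rw [Module.finrank_finsupp_self, Fintype.card_eq_nat_card]
  refine (Nat.card_congr (Equiv.ofBijective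
    (fun v => ⟨{v}, singleton_mem_indepFaces G v, card_singleton v⟩) ⟨fun v w h => ?_, ?_⟩)).symm
  · simpa using congrArg Subtype.val h
  · rintro ⟨s, hs⟩
    obtain ⟨v, rfl⟩ := card_eq_one.mp hs.2
    exact ⟨v, rfl⟩

noncomputable def chainMap (φ : H ↪g G) (i : ℕ) : chains H i →ₗ[ℚ] chains G i :=
  Finsupp.lmapDomain ℚ ℚ fun s =>
    ⟨s.1.map φ.toEmbedding, map_mem_indepFaces G φ s.2.1, (card_map _).trans s.2.2⟩

theorem chainMap_injective (φ : H ↪g G) (i : ℕ) : Function.Injective (chainMap G φ i) :=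
  Finsupp.mapDomain_injective fun _ _ h =>
    Subtype.ext (map_injective φ.toEmbedding (congrArg Subtype.val h))

theorem chainMap_vertexChain (φ : H ↪g G) (w : W) :
    chainMap G φ 1 (vertexChain H w) = vertexChain G (φ w) := by
  simp [chainMap, vertexChain]

variable [DecidableEq V] [LinearOrder V]

theorem bdry_single {i : ℕ} (s : {s : Finset V // s ∈ indepFaces G ∧ s.card = i + 1}) (c : ℚ) :
    bdry G i (Finsupp.single s c) =
      c • ∑ a ∈ s.1, ((-1 : ℚ) ^ #{b ∈ s.1 | b < a}) • faceChain G i (s.1.erase a) := by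
  rw [bdry, Finsupp.lsum_single, LinearMap.toSpanSingleton_apply,
    ← sum_attach s.1 fun a => ((-1 : ℚ) ^ #{b ∈ s.1 | b < a}) • faceChain G i (s.1.erase a)]
  congr 1
  refine sum_congr rfl fun a _ => ?_
  rw [faceChain_of_mem]

theorem bdry_vertexChain (v : V) : bdry G 0 (vertexChain G v) = Finsupp.single default 1 := by
  rw [vertexChain, bdry_single, sum_singleton, erase_singleton,
    faceChain_of_mem G ⟨by simp [indepFaces], card_empty⟩]
  simp [filter_singleton]

theorem bdry_pair {a b : V} (hab : a < b) (h : ¬G.Adj a b) (c : ℚ) :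
    bdry G 1 (Finsupp.single ⟨{a, b}, pair_mem_indepFaces G h, card_pair hab.ne⟩ c) =
      c • (vertexChain G b - vertexChain G a) := by
  have ha : #{x ∈ ({a, b} : Finset V) | x < a} = 0 := by
    simp [filter_insert, filter_singleton, hab.not_gt]
  have hb : #{x ∈ ({a, b} : Finset V) | x < b} = 1 := by
    simp [filter_insert, filter_singleton, hab]
  have ea : ({a, b} : Finset V).erase a = {b} := erase_insert (by simp [hab.ne])
  have eb : ({a, b} : Finset V).erase b = {a} := by
    rw [erase_insert_of_ne hab.ne, erase_singleton, insert_empty]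
  rw [bdry_single, sum_pair hab.ne, ha, hb, ea, eb,
    faceChain_of_mem G ⟨singleton_mem_indepFaces G a, card_singleton a⟩,
    faceChain_of_mem G ⟨singleton_mem_indepFaces G b, card_singleton b⟩]
  simp only [vertexChain, pow_zero, pow_one, one_smul, neg_one_smul]
  abel_nf

theorem range_bdry_one_eq_span :
    LinearMap.range (bdry G 1) = Submodule.span ℚ
      {x | ∃ a b, Gᶜ.Adj a b ∧ x = vertexChain G b - vertexChain G a} := by
  apply le_antisymm
  · rintro _ ⟨y, rfl⟩
    induction y using Finsupp.induction_linear with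
    | zero => simp
    | add f g hf hg => rw [map_add]; exact add_mem hf hg
    | single s c =>
      obtain ⟨s, hs⟩ := s
      obtain ⟨a, b, hab, rfl⟩ : ∃ a b, a < b ∧ s = {a, b} := by
        obtain ⟨a, b, hne, rfl⟩ := card_eq_two.mp hs.2
        rcases hne.lt_or_gt with h | h
        · exact ⟨a, b, h, rfl⟩
        · exact ⟨b, a, h, pair_comm a b⟩
      have h : ¬G.Adj a b := hs.1 a (by simp) b (by simp)
      rw [bdry_pair G hab h]
      exact Submodule.smul_mem _ _
        (Submodule.subset_span ⟨a, b, (G.compl_adj a b).mpr ⟨hab.ne, h⟩, rfl⟩)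
  · refine Submodule.span_le.mpr ?_
    rintro _ ⟨a, b, hab, rfl⟩
    obtain ⟨hne, h⟩ := (G.compl_adj a b).mp hab
    rcases hne.lt_or_gt with hlt | hlt
    · exact ⟨_, (bdry_pair G hlt h 1).trans (one_smul _ _)⟩
    · refine ⟨_, (bdry_pair G hlt (fun h' => h h'.symm) (-1)).trans ?_⟩
      rw [neg_one_smul, neg_sub]

theorem bdry_zero_surjective [Nonempty V] : Function.Surjective (bdry G 0) := by
  intro x
  obtain ⟨v⟩ := ‹Nonempty V›
  refine ⟨x default • vertexChain G v, ?_⟩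
  rw [map_smul, bdry_vertexChain, Finsupp.smul_single_one]
  exact Finsupp.unique_ext (by simp)

theorem range_bdry_one_le_ker_bdry_zero :
    LinearMap.range (bdry G 1) ≤ LinearMap.ker (bdry G 0) := by
  rw [range_bdry_one_eq_span, Submodule.span_le]
  rintro _ ⟨a, b, -, rfl⟩
  simp [bdry_vertexChain]

theorem finrank_redHomology_zero_add_finrank_range [Finite V] [Nonempty V] :
    Module.finrank ℚ (redHomology G 0) + Module.finrank ℚ (LinearMap.range (bdry G 1)) + 1 =
      Nat.card V := by
  classical
  have := Fintype.ofFinite V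
  have hker : Module.finrank ℚ (LinearMap.ker (bdry G 0)) + 1 = Nat.card V := by
    have := LinearMap.finrank_range_add_finrank_ker (bdry G 0)
    rw [LinearMap.range_eq_top.mpr (bdry_zero_surjective G), finrank_top,
      Module.finrank_finsupp_self, Fintype.card_unique, finrank_chains_one] at this
    omega
  rw [← hker, ← Submodule.finrank_quotient_add_finrank
    ((LinearMap.range (bdry G 1)).comap (LinearMap.ker (bdry G 0)).subtype),
    (Submodule.comapSubtypeEquivOfLe (range_bdry_one_le_ker_bdry_zero G)).finrank_eq]

variable [DecidableEq W] [LinearOrder W]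

theorem finrank_range_bdry_one_eq_of_embedding (φ : H ↪g G)
    (hφ : ∀ a b, Gᶜ.Adj a b → a ∈ Set.range φ) :
    Module.finrank ℚ (LinearMap.range (bdry G 1)) =
      Module.finrank ℚ (LinearMap.range (bdry H 1)) := by
  have himage : chainMap G φ 1 ''
      {x | ∃ a b, Hᶜ.Adj a b ∧ x = vertexChain H b - vertexChain H a} =
      {x | ∃ a b, Gᶜ.Adj a b ∧ x = vertexChain G b - vertexChain G a} := by
    ext x
    constructor
    · rintro ⟨_, ⟨a, b, hab, rfl⟩, rfl⟩
      refine ⟨φ a, φ b, ?_, by simp [chainMap_vertexChain]⟩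
      simpa [φ.injective.ne_iff] using hab
    · rintro ⟨_, _, hab, rfl⟩
      obtain ⟨a, rfl⟩ := hφ _ _ hab
      obtain ⟨b, rfl⟩ := hφ _ _ hab.symm
      refine ⟨_, ⟨a, b, ?_, rfl⟩, by simp [chainMap_vertexChain]⟩
      simpa [φ.injective.ne_iff] using hab
  rw [(Submodule.equivMapOfInjective _ (chainMap_injective G φ 1) _).finrank_eq,
    range_bdry_one_eq_span H, range_bdry_one_eq_span G, Submodule.map_span, himage]

theorem finrank_redHomology_zero_add_natCard_eq_of_embedding [Finite V] [Nonempty W]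
    (φ : H ↪g G) (hφ : ∀ a b, Gᶜ.Adj a b → a ∈ Set.range φ) :
    Module.finrank ℚ (redHomology G 0) + Nat.card W =
      Module.finrank ℚ (redHomology H 0) + Nat.card V := by
  have : Finite W := Finite.of_injective φ φ.injective
  have : Nonempty V := ⟨φ (Classical.arbitrary W)⟩
  have hG := finrank_redHomology_zero_add_finrank_range G
  have hH := finrank_redHomology_zero_add_finrank_range H
  rw [finrank_range_bdry_one_eq_of_embedding G φ hφ] at hG
  omega

end IndependenceComplex

def SimpleGraph.Embedding.induceOfMapsTo {V W : Type} {G : SimpleGraph V} {H : SimpleGraph W}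
    (φ : H ↪g G) {s : Set W} {t : Set V} (h : Set.MapsTo φ s t) : H.induce s ↪g G.induce t where
  toEmbedding := ⟨h.restrict φ s t, h.restrict_inj.mpr φ.injective.injOn⟩
  map_rel_iff' := by simp [φ.map_adj_iff]

theorem bettiNumber_linearStrand {V : Type} [Fintype V] [DecidableEq V] [LinearOrder V]
    (G : SimpleGraph V) (k : ℕ) :
    bettiNumber G k (k + 1) =
      ∑ S ∈ (powersetCard (k + 1) univ : Finset (Finset V)),
        Module.finrank ℚ (redHomology (G.induce (S : Set V)) 0) := by
  rw [bettiNumber, Nat.add_sub_cancel_left, Nat.sub_self, powersetCard_eq_filter, powerset_univ]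

theorem Fin.sum_powersetCard_succ_univ {M : Type*} [AddCommMonoid M] (n k : ℕ)
    (f : Finset (Fin (n + 1)) → M) :
    ∑ S ∈ powersetCard (k + 1) univ, f S =
      ∑ T ∈ powersetCard (k + 1) univ, f (T.map (Fin.succEmb n)) +
        ∑ T ∈ powersetCard k univ, f (insert 0 (T.map (Fin.succEmb n))) := by
  have h0 : (0 : Fin (n + 1)) ∉ univ.map (Fin.succEmb n) := by simp
  have huniv : univ = insert 0 (univ.map (Fin.succEmb n)) := by
    rw [Fin.univ_succ, cons_eq_insert]
    rfl
  rw [huniv, powersetCard_succ_insert h0, sum_union, sum_image,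
    powersetCard_map, powersetCard_map, sum_map, sum_map]
  · rfl
  · exact fun T hT T' hT' => insert_erase_invOn.2.injOn
      (notMem_mono (mem_powersetCard.1 hT).1 h0) (notMem_mono (mem_powersetCard.1 hT').1 h0)
  · refine disjoint_left.mpr fun S hS hS' => ?_
    obtain ⟨T, -, rfl⟩ := mem_image.1 hS'
    exact notMem_mono (mem_powersetCard.1 hS).1 h0 (mem_insert_self 0 T)

section Wheel

variable {n : ℕ}

theorem wheelGraph_adj_zero {b : Fin (n + 1)} (hb : b ≠ 0) : (wheelGraph n).Adj 0 b := by
  simp [wheelGraph, hb.symm]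

theorem wheelGraph_adj_succ (p q : Fin n) :
    (wheelGraph n).Adj p.succ q.succ ↔ (cycleGraph n).Adj p q := by
  simp [wheelGraph, cycleGraph]

def rimEmbedding (n : ℕ) : cycleGraph n ↪g wheelGraph n :=
  ⟨Fin.succEmb n, wheelGraph_adj_succ _ _⟩

theorem finrank_redHomology_zero_wheelGraph_induce_add (S : Finset (Fin (n + 1)))
    (T : Finset (Fin n)) (hST : ∀ x, x.succ ∈ S ↔ x ∈ T) (hT : T.Nonempty) :
    Module.finrank ℚ (redHomology ((wheelGraph n).induce (S : Set (Fin (n + 1)))) 0) + #T =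
      Module.finrank ℚ (redHomology ((cycleGraph n).induce (T : Set (Fin n))) 0) + #S := by
  have : Nonempty (T : Set (Fin n)) := hT.coe_sort
  have key := finrank_redHomology_zero_add_natCard_eq_of_embedding _
    ((rimEmbedding n).induceOfMapsTo fun x hx => (hST x).mpr hx) ?_
  · simpa using key
  rintro ⟨a, ha⟩ ⟨b, hb⟩ hab
  rw [SimpleGraph.compl_adj, SimpleGraph.comap_adj, Ne, Subtype.mk.injEq] at hab
  obtain ⟨w, rfl⟩ : ∃ w : Fin n, w.succ = a := Fin.exists_succ_eq.mpr fun h0 => by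
    subst h0
    exact hab.2 (wheelGraph_adj_zero (Ne.symm hab.1))
  exact ⟨⟨w, (hST w).mp ha⟩, rfl⟩

theorem finrank_redHomology_zero_wheelGraph_induce_map_succ {T : Finset (Fin n)}
    (hT : T.Nonempty) :
    Module.finrank ℚ (redHomology ((wheelGraph n).induce
      (T.map (Fin.succEmb n) : Set (Fin (n + 1)))) 0) =
    Module.finrank ℚ (redHomology ((cycleGraph n).induce (T : Set (Fin n))) 0) := by
  simpa using
    finrank_redHomology_zero_wheelGraph_induce_add (T.map (Fin.succEmb n)) T (by simp) hT

theorem finrank_redHomology_zero_wheelGraph_induce_insert_zero {T : Finset (Fin n)}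
    (hT : T.Nonempty) :
    Module.finrank ℚ (redHomology ((wheelGraph n).induce
      ((insert 0 (T.map (Fin.succEmb n)) : Finset (Fin (n + 1))) : Set (Fin (n + 1)))) 0) =
    Module.finrank ℚ (redHomology ((cycleGraph n).induce (T : Set (Fin n))) 0) + 1 := by
  have := finrank_redHomology_zero_wheelGraph_induce_add (insert 0 (T.map (Fin.succEmb n))) T
    (by simp) hT
  rw [card_insert_of_notMem (by simp), card_map] at this
  omega

end Wheel

theorem betti_wheel_linear_general (n : ℕ) (i : ℕ) (hi : 1 ≤ i) :
    bettiNumber (wheelGraph n) i (i + 1) =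
      bettiNumber (cycleGraph n) i (i + 1) + bettiNumber (cycleGraph n) (i - 1) i +
        n.choose i := by
  obtain ⟨k, rfl⟩ := Nat.exists_eq_add_of_le' hi
  have hne {m : ℕ} {T : Finset (Fin n)} (hT : T ∈ powersetCard (m + 1) univ) : T.Nonempty :=
    card_pos.mp ((mem_powersetCard.mp hT).2 ▸ m.succ_pos)
  rw [Nat.add_sub_cancel, bettiNumber_linearStrand, bettiNumber_linearStrand,
    bettiNumber_linearStrand, Fin.sum_powersetCard_succ_univ,
    sum_congr rfl fun T hT => finrank_redHomology_zero_wheelGraph_induce_map_succ (hne hT),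
    sum_congr rfl fun T hT => finrank_redHomology_zero_wheelGraph_induce_insert_zero (hne hT),
    sum_add_distrib, sum_const, card_powersetCard, card_univ, Fintype.card_fin, smul_eq_mul,
    mul_one]
  exact (add_assoc _ _ _).symm

/-- The linear strand: `β_{i,i+1}(W_n) = β_{i,i+1}(C_n) + β_{i-1,i}(C_n) + C(n,i)`. -/
theorem betti_wheel_linear (n : ℕ) (hn : 3 ≤ n) (i : ℕ) (hi : 1 ≤ i) :
    bettiNumber (wheelGraph n) i (i + 1) =
      bettiNumber (cycleGraph n) i (i + 1) + bettiNumber (cycleGraph n) (i - 1) i +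
        n.choose i :=
  betti_wheel_linear_general n i hi
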